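/- Consider X_{t+1} = f_{σ_t}(X_t) with σ an irreducible Markov chain on P = {1,…,N} with matrix [p_{ij}], and suppose there exist nonnegative V_i, α₁, α₂ ∈ K, a nonnegative matrix [λ_{ij}], r > 0, μ > 1 with (V1) α₁(‖x − x_i*‖) ≤ V_i(x) ≤ α₂(‖x − x_i*‖), (V2) V_i ≤ μ V_j on {‖x‖ > r}, and (V3') V_i(f_j(x)) ≤ λ_{ij} V_i(x) for all x, i, j. If μ · max_i Σ_j p_{ij} λ_{ji} < 1, then with τ_r = inf{t : ‖X_t‖ ≤ r} and V_i' = V_i 1_{‖x‖>r}, there exists α > 0 such that (e^{α(t∧τ_r)} V'_{σ_{t∧τ_r}}(X_{t∧τ_r}))_t is a nonnegative supermartingale for ‖x₀‖ > r. -/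

import Mathlib

open MeasureTheory ProbabilityTheory Classical

/-- Trajectory of the randomly switched system `X_{t+1} = f_{σ_t}(X_t)`, `X_0 = x₀`. -/
def traj {N : ℕ} {Ω E : Type*} (f : Fin N → E → E) (σ : ℕ → Ω → Fin N) (x₀ : E) :
    ℕ → Ω → E
  | 0 => fun _ => x₀
  | t + 1 => fun ω => f (σ t ω) (traj f σ x₀ t ω)

/-- First hitting time (from time `0`) of the set `A` by the process `X`, in `ℕ∞`. -/
noncomputable def hitTime {Ω E : Type*} (X : ℕ → Ω → E) (A : Set E) (ω : Ω) : ℕ∞ :=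
  sInf {n : ℕ∞ | ∃ m : ℕ, n = (m : ℕ∞) ∧ X m ω ∈ A}

/-- The stopped index `t ∧ τ_A`. -/
noncomputable def stopIdx {Ω E : Type*} (X : ℕ → Ω → E) (A : Set E) (t : ℕ) (ω : Ω) : ℕ :=
  (min (t : ℕ∞) (hitTime X A ω)).toNat

section aux
variable {Ω E : Type*} {X : ℕ → Ω → E} {A : Set E} {ω : Ω}

lemma hitTime_le {m : ℕ} (h : X m ω ∈ A) : hitTime X A ω ≤ m :=
  sInf_le ⟨m, rfl, h⟩

lemma lt_hitTime {t : ℕ} (h : ∀ m ≤ t, X m ω ∉ A) : (t : ℕ∞) < hitTime X A ω := by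
  have h1 : ((t + 1 : ℕ) : ℕ∞) ≤ hitTime X A ω := by
    refine le_sInf ?_
    rintro n ⟨m, rfl, hm⟩
    have hlt : t < m := not_le.mp fun hc => h m hc hm
    exact_mod_cast Nat.succ_le_of_lt hlt
  exact lt_of_lt_of_le (by exact_mod_cast Nat.lt_succ_self t) h1

lemma stopIdx_of_not_hit {t : ℕ} (h : ∀ m ≤ t, X m ω ∉ A) : stopIdx X A t ω = t := by
  unfold stopIdx
  rw [min_eq_left (le_of_lt (lt_hitTime h))]
  exact ENat.toNat_coe t

lemma stopIdx_succ_of_not_hit {t : ℕ} (h : ∀ m ≤ t, X m ω ∉ A) :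
    stopIdx X A (t + 1) ω = t + 1 := by
  have h2 : ((t + 1 : ℕ) : ℕ∞) ≤ hitTime X A ω := by
    have := Order.add_one_le_of_lt (lt_hitTime h)
    exact_mod_cast this
  unfold stopIdx
  rw [min_eq_left h2]
  exact ENat.toNat_coe _

lemma hitTime_eq {s : ℕ} (hs : X s ω ∈ A) (hmin : ∀ m < s, X m ω ∉ A) :
    hitTime X A ω = s := by
  refine le_antisymm (hitTime_le hs) (le_sInf ?_)
  rintro n ⟨m, rfl, hm⟩
  have : s ≤ m := not_lt.mp fun hc => hmin m hc hm
  exact_mod_cast this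

lemma stopIdx_of_hit {t s : ℕ} (hst : s ≤ t) (hs : X s ω ∈ A)
    (hmin : ∀ m < s, X m ω ∉ A) : stopIdx X A t ω = s := by
  unfold stopIdx
  rw [hitTime_eq hs hmin, min_eq_right (by exact_mod_cast hst)]
  exact ENat.toNat_coe s

lemma stopIdx_le (t : ℕ) (ω : Ω) : stopIdx X A t ω ≤ t := by
  unfold stopIdx
  have h := min_le_left (t : ℕ∞) (hitTime X A ω)
  have := ENat.toNat_le_toNat h (by simp)
  simpa using this

end aux

lemma measSet_lt_helper {Ω : Type*} (m : MeasurableSpace Ω) {F G : Ω → ℝ}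
    (hF : @Measurable Ω ℝ m _ F) (hG : @Measurable Ω ℝ m _ G) :
    @MeasurableSet Ω m {ω | F ω < G ω} := by
  letI := m; exact measurableSet_lt hF hG

lemma measSet_le_helper {Ω : Type*} (m : MeasurableSpace Ω) {F G : Ω → ℝ}
    (hF : @Measurable Ω ℝ m _ F) (hG : @Measurable Ω ℝ m _ G) :
    @MeasurableSet Ω m {ω | F ω ≤ G ω} := by
  letI := m; exact measurableSet_le hF hG

noncomputable def reach {N : ℕ} {E : Type*} [DecidableEq E] (f : Fin N → E → E) (x₀ : E) :
    ℕ → Finset E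
  | 0 => {x₀}
  | t + 1 => Finset.univ.biUnion fun i => (reach f x₀ t).image (f i)

lemma traj_mem_reach {N : ℕ} {Ω E : Type*} [DecidableEq E] (f : Fin N → E → E)
    (σ : ℕ → Ω → Fin N) (x₀ : E) (t : ℕ) (ω : Ω) :
    traj f σ x₀ t ω ∈ reach f x₀ t := by
  induction t with
  | zero => simp [traj, reach]
  | succ t ih =>
    simp only [traj, reach, Finset.mem_biUnion, Finset.mem_univ, Finset.mem_image]
    exact ⟨σ t ω, trivial, traj f σ x₀ t ω, ih, rfl⟩


/-- Proposition (supermartingale under (S2)): for the switched system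
`X_{t+1} = f_{σ_t}(X_t)` with `σ` an irreducible Markov chain with matrix `p`, under
(V1), (V2) and (V3') `V_i(f_j(x)) ≤ λ_{ij} V_i(x)`, if `μ · max_i Σ_j p_{ij} λ_{ji} < 1`,
then with `τ_r = inf{t : ‖X_t‖ ≤ r}` and `V_i' = V_i 1_{‖x‖>r}`, there exists `α > 0`
such that `(e^{α(t∧τ_r)} V'_{σ_{t∧τ_r}}(X_{t∧τ_r}))_t` is a nonnegative supermartingale
for `‖x₀‖ > r`. -/
theorem stmt_10 {d N : ℕ} (hN : 0 < N)
    (f : Fin N → EuclideanSpace ℝ (Fin d) → EuclideanSpace ℝ (Fin d))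
    (hfc : ∀ i, Continuous (f i)) (hfl : ∀ i, LocallyLipschitz (f i))
    (xstar : Fin N → EuclideanSpace ℝ (Fin d)) (hfix : ∀ i, f i (xstar i) = 0)
    (p : Fin N → Fin N → ℝ) (hp : ∀ i j, 0 ≤ p i j) (hrow : ∀ i, ∑ j, p i j = 1)
    (hirr : ∀ i j, ∃ n : ℕ, 0 < n ∧ 0 < ((Matrix.of p) ^ n) i j)
    {Ω : Type*} [mΩ : MeasurableSpace Ω] (P : Measure Ω) [IsProbabilityMeasure P]
    (ℱ : Filtration ℕ mΩ)
    (σ : ℕ → Ω → Fin N) (hσad : ∀ t, Measurable[ℱ t] (σ t))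
    (hMarkov : ∀ (t : ℕ) (g : Fin N → ℝ),
      P[(fun ω => g (σ (t + 1) ω))|ℱ t] =ᵐ[P] fun ω => ∑ j, p (σ t ω) j * g j)
    (V : Fin N → EuclideanSpace ℝ (Fin d) → ℝ) (hV0 : ∀ i x, 0 ≤ V i x)
    (hVmeas : ∀ i, Measurable (V i))
    (α₁ α₂ : ℝ → ℝ)
    (hα₁ : Continuous α₁ ∧ StrictMonoOn α₁ (Set.Ici 0) ∧ α₁ 0 = 0)
    (hα₂ : Continuous α₂ ∧ StrictMonoOn α₂ (Set.Ici 0) ∧ α₂ 0 = 0)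
    (μ r : ℝ) (hμ : 1 < μ) (hr : 0 < r)
    (Λ : Fin N → Fin N → ℝ) (hΛ : ∀ i j, 0 ≤ Λ i j)
    (hV1 : ∀ i x, α₁ ‖x - xstar i‖ ≤ V i x ∧ V i x ≤ α₂ ‖x - xstar i‖)
    (hV2 : ∀ i j x, r < ‖x‖ → V i x ≤ μ * V j x)
    (hV3' : ∀ i j x, V i (f j x) ≤ Λ i j * V i x)
    (hcond : μ * sSup {a | ∃ i, a = ∑ j, p i j * Λ j i} < 1)
    (x₀ : EuclideanSpace ℝ (Fin d)) (hx₀ : r < ‖x₀‖) :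
    ∃ α : ℝ, 0 < α ∧
      (∀ t ω, 0 ≤ Real.exp (α * (stopIdx (traj f σ x₀) {x | ‖x‖ ≤ r} t ω)) *
        (if r < ‖traj f σ x₀ (stopIdx (traj f σ x₀) {x | ‖x‖ ≤ r} t ω) ω‖ then
          V (σ (stopIdx (traj f σ x₀) {x | ‖x‖ ≤ r} t ω) ω)
            (traj f σ x₀ (stopIdx (traj f σ x₀) {x | ‖x‖ ≤ r} t ω) ω)
        else 0)) ∧
      Supermartingale (fun (t : ℕ) (ω : Ω) =>
        Real.exp (α * (stopIdx (traj f σ x₀) {x | ‖x‖ ≤ r} t ω)) *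
        (if r < ‖traj f σ x₀ (stopIdx (traj f σ x₀) {x | ‖x‖ ≤ r} t ω) ω‖ then
          V (σ (stopIdx (traj f σ x₀) {x | ‖x‖ ≤ r} t ω) ω)
            (traj f σ x₀ (stopIdx (traj f σ x₀) {x | ‖x‖ ≤ r} t ω) ω)
        else 0)) ℱ P := by
  classical
  haveI : Nonempty (Fin N) := ⟨⟨0, hN⟩⟩
  letI : DecidableEq (EuclideanSpace ℝ (Fin d)) := Classical.decEq _
  set X : ℕ → Ω → EuclideanSpace ℝ (Fin d) := traj f σ x₀ with hXdef
  set A : Set (EuclideanSpace ℝ (Fin d)) := {x | ‖x‖ ≤ r} with hAdef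
  set K : ℝ := sSup {a | ∃ i, a = ∑ j, p i j * Λ j i} with hKdef
  have hbdd : BddAbove {a | ∃ i, a = ∑ j, p i j * Λ j i} := by
    have he : {a | ∃ i, a = ∑ j, p i j * Λ j i} =
        Set.range (fun i : Fin N => ∑ j, p i j * Λ j i) := by
      ext a; simp [Set.range, eq_comm]
    rw [he]; exact (Set.finite_range _).bddAbove
  have hKmem : ∀ i : Fin N, (∑ j, p i j * Λ j i) ≤ K := fun i => le_csSup hbdd ⟨i, rfl⟩
  have hK0 : 0 ≤ K :=
    le_trans (Finset.sum_nonneg fun j _ => mul_nonneg (hp _ j) (hΛ j _))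
      (hKmem (Classical.arbitrary _))
  have hc0 : 0 ≤ μ * K := mul_nonneg (by linarith) hK0
  set m0 : ℝ := max (μ * K) (Real.exp (-1)) with hm0def
  have hm0pos : 0 < m0 := lt_of_lt_of_le (Real.exp_pos _) (le_max_right _ _)
  have hm0lt : m0 < 1 := by
    refine max_lt hcond ?_
    rw [← Real.exp_zero]; exact Real.exp_lt_exp.mpr (by norm_num)
  set α : ℝ := -Real.log m0 with hαdef
  have hα : 0 < α := neg_pos.mpr (Real.log_neg hm0pos hm0lt)
  have hkey : Real.exp α * (μ * K) ≤ 1 := by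
    have h1 : Real.exp α * m0 = 1 := by
      rw [hαdef, Real.exp_neg, Real.exp_log hm0pos]
      exact inv_mul_cancel₀ (ne_of_gt hm0pos)
    calc Real.exp α * (μ * K) ≤ Real.exp α * m0 :=
          mul_le_mul_of_nonneg_left (le_max_left _ _) (Real.exp_pos _).le
      _ = 1 := h1
  refine ⟨α, hα, ?_, ?_⟩
  · intro t ω
    refine mul_nonneg (Real.exp_nonneg _) ?_
    split
    · exact hV0 _ _
    · exact le_rfl
  · set M : ℕ → Ω → ℝ := fun t ω =>
      Real.exp (α * (stopIdx X A t ω)) *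
        (if r < ‖X (stopIdx X A t ω) ω‖ then
          V (σ (stopIdx X A t ω) ω) (X (stopIdx X A t ω) ω) else 0) with hMdef
    have hMnonneg : ∀ t ω, 0 ≤ M t ω := by
      intro t ω
      refine mul_nonneg (Real.exp_nonneg _) ?_
      split
      · exact hV0 _ _
      · exact le_rfl
    have hFmeas : Measurable (fun q : EuclideanSpace ℝ (Fin d) × Fin N => f q.2 q.1) :=
      measurable_from_prod_countable_left fun i => (hfc i).measurable
    have hVpm : Measurable (fun q : EuclideanSpace ℝ (Fin d) × Fin N => V q.2 q.1) :=
      measurable_from_prod_countable_left fun i => hVmeas i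
    have hXmeas : ∀ m t, m ≤ t + 1 → Measurable[ℱ t] (X m) := by
      intro m
      induction m with
      | zero => exact fun t _ => measurable_const
      | succ m ih =>
        intro t hmt
        have hm : m ≤ t := by omega
        have h1 : Measurable[ℱ t] (X m) := ih t (by omega)
        have h2 : Measurable[ℱ t] (σ m) := (hσad m).mono (ℱ.mono hm) le_rfl
        have heq : X (m + 1) = fun ω => f (σ m ω) (X m ω) := rfl
        rw [heq]
        exact hFmeas.comp (h1.prodMk h2)
    have hstop_nohit : ∀ t ω, (∀ m ≤ t, r < ‖X m ω‖) → stopIdx X A t ω = t :=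
      fun t ω h => stopIdx_of_not_hit fun m hm hc => not_le.mpr (h m hm) hc
    have hstop_nohit' : ∀ t ω, (∀ m ≤ t, r < ‖X m ω‖) → stopIdx X A (t + 1) ω = t + 1 :=
      fun t ω h => stopIdx_succ_of_not_hit fun m hm hc => not_le.mpr (h m hm) hc
    have hstop_hit : ∀ t ω, ¬(∀ m ≤ t, r < ‖X m ω‖) →
        ∃ s ≤ t, stopIdx X A t ω = s ∧ stopIdx X A (t + 1) ω = s ∧ ‖X s ω‖ ≤ r ∧
          ∀ m < s, r < ‖X m ω‖ := by
      intro t ω h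
      push_neg at h
      obtain ⟨m₀, hm₀t, hm₀⟩ := h
      have hex : ∃ s, X s ω ∈ A := ⟨m₀, hm₀⟩
      have hsA : X (Nat.find hex) ω ∈ A := Nat.find_spec hex
      have hmin : ∀ m < Nat.find hex, X m ω ∉ A := fun m hm => Nat.find_min hex hm
      have hst : Nat.find hex ≤ t := le_trans (Nat.find_min' hex hm₀) hm₀t
      exact ⟨Nat.find hex, hst, stopIdx_of_hit hst hsA hmin,
        stopIdx_of_hit (hst.trans (Nat.le_succ t)) hsA hmin, hsA,
        fun m hm => not_le.mp (hmin m hm)⟩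
    have hMzero : ∀ t ω, ¬(∀ m ≤ t, r < ‖X m ω‖) → M t ω = 0 ∧ M (t + 1) ω = 0 := by
      intro t ω h
      obtain ⟨s, hst, h1, h2, hle, -⟩ := hstop_hit t ω h
      constructor
      · simp only [hMdef, h1]; rw [if_neg (not_lt.mpr hle), mul_zero]
      · simp only [hMdef, h2]; rw [if_neg (not_lt.mpr hle), mul_zero]
    have hconst : ∀ (t : ℕ) (c : ℝ), Measurable[ℱ t] fun _ : Ω => c :=
      fun t c => @measurable_const ℝ Ω _ (ℱ t) c
    have hnorm_meas : ∀ m t, m ≤ t + 1 → MeasurableSet[ℱ t] {ω | r < ‖X m ω‖} := by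
      intro m t h
      letI : MeasurableSpace Ω := ℱ t
      exact measurableSet_lt measurable_const (hXmeas m t h).norm
    have hstopset : ∀ t s, MeasurableSet[ℱ t] {ω | stopIdx X A t ω = s} := by
      intro t s
      rcases lt_trichotomy s t with hst | heq | hst
      · have he : {ω | stopIdx X A t ω = s} =
            (⋂ m ∈ Set.Iio s, {ω | r < ‖X m ω‖}) ∩ {ω | ‖X s ω‖ ≤ r} := by
          ext ω
          simp only [Set.mem_inter_iff, Set.mem_iInter, Set.mem_setOf_eq, Set.mem_Iio]
          constructor
          · intro hI
            by_cases hD : ∀ m ≤ t, r < ‖X m ω‖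
            · have := hstop_nohit t ω hD
              omega
            · obtain ⟨s', hs't, h1, -, hle, hmin⟩ := hstop_hit t ω hD
              have hss : s' = s := by omega
              subst hss
              exact ⟨fun m hm => hmin m hm, hle⟩
          · rintro ⟨hmin, hle⟩
            exact stopIdx_of_hit hst.le hle fun m hm hc => not_le.mpr (hmin m hm) hc
        rw [he]
        refine (MeasurableSet.biInter (Set.to_countable _) fun m hm => ?_).inter
          (by letI : MeasurableSpace Ω := ℱ t
              exact measurableSet_le (hXmeas s t (by omega)).norm measurable_const)
        have hm' : m < s := hm
        exact hnorm_meas m t (by omega)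
      · subst heq
        have he : {ω | stopIdx X A s ω = s} = ⋂ m ∈ Set.Iio s, {ω | r < ‖X m ω‖} := by
          ext ω
          simp only [Set.mem_iInter, Set.mem_setOf_eq, Set.mem_Iio]
          constructor
          · intro hI
            by_cases hD : ∀ m ≤ s, r < ‖X m ω‖
            · exact fun m hm => hD m hm.le
            · obtain ⟨s', hs't, h1, -, hle, hmin⟩ := hstop_hit s ω hD
              have hss : s' = s := by omega
              subst hss
              exact fun m hm => hmin m hm
          · intro hmin
            by_cases hXs : ‖X s ω‖ ≤ r
            · exact stopIdx_of_hit le_rfl hXs fun m hm hc => not_le.mpr (hmin m hm) hc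
            · refine hstop_nohit s ω fun m hm => ?_
              rcases Nat.lt_or_ge m s with h' | h'
              · exact hmin m h'
              · have hms : m = s := by omega
                subst hms
                exact not_le.mp hXs
        rw [he]
        refine MeasurableSet.biInter (Set.to_countable _) fun m hm => ?_
        have hm' : m < s := hm
        exact hnorm_meas m s (by omega)
      · have he : {ω | stopIdx X A t ω = s} = ∅ :=
          Set.eq_empty_iff_forall_notMem.mpr fun ω h => by
            have h' : stopIdx X A t ω = s := h
            have := stopIdx_le (X := X) (A := A) t ω
            omega
        rw [he]
        exact @MeasurableSet.empty Ω (ℱ t)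
    have hGmeas : ∀ s t, s ≤ t → Measurable[ℱ t]
        (fun ω => Real.exp (α * s) *
          (if r < ‖X s ω‖ then V (σ s ω) (X s ω) else 0)) := by
      intro s t hst
      letI : MeasurableSpace Ω := ℱ t
      refine measurable_const.mul (Measurable.ite (hnorm_meas s t (by omega)) ?_ measurable_const)
      exact hVpm.comp ((hXmeas s t (by omega)).prodMk ((hσad s).mono (ℱ.mono hst) le_rfl))
    have hMmeas : ∀ t, Measurable[ℱ t] (M t) := by
      intro t
      have hrep : M t = fun ω => ∑ s ∈ Finset.range (t + 1),
          if stopIdx X A t ω = s then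
            (Real.exp (α * s) * (if r < ‖X s ω‖ then V (σ s ω) (X s ω) else 0)) else 0 := by
        funext ω
        rw [Finset.sum_ite_eq, if_pos (Finset.mem_range.mpr (Nat.lt_succ_of_le (stopIdx_le t ω)))]
      rw [hrep]
      letI : MeasurableSpace Ω := ℱ t
      exact Finset.measurable_sum _ fun s hs =>
        Measurable.ite (hstopset t s) (hGmeas s t (by
          have := Finset.mem_range.mp hs; omega)) measurable_const
    set R : ℕ → Finset (EuclideanSpace ℝ (Fin d)) :=
      fun t => (Finset.range (t + 1)).biUnion (reach f x₀) with hRdef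
    have hXR : ∀ s t ω, s ≤ t → X s ω ∈ R t := fun s t ω h =>
      Finset.mem_biUnion.mpr ⟨s, Finset.mem_range.mpr (by omega), traj_mem_reach f σ x₀ s ω⟩
    set B : ℕ → ℝ := fun t => ∑ i : Fin N, ∑ x ∈ R t, V i x with hBdef
    have hB0 : ∀ t, 0 ≤ B t :=
      fun t => Finset.sum_nonneg fun i _ => Finset.sum_nonneg fun x _ => hV0 i x
    have hVB : ∀ (i : Fin N) x t, x ∈ R t → V i x ≤ B t := by
      intro i x t hx
      calc V i x ≤ ∑ x' ∈ R t, V i x' := Finset.single_le_sum (fun x' _ => hV0 i x') hx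
        _ ≤ B t := Finset.single_le_sum
            (fun i' (_ : i' ∈ Finset.univ) => Finset.sum_nonneg fun x' _ => hV0 i' x')
            (Finset.mem_univ i)
    have hMle : ∀ t ω, M t ω ≤ Real.exp (α * t) * B t := by
      intro t ω
      have hs := stopIdx_le (X := X) (A := A) t ω
      have h1 : Real.exp (α * (stopIdx X A t ω : ℝ)) ≤ Real.exp (α * t) :=
        Real.exp_le_exp.mpr (mul_le_mul_of_nonneg_left (by exact_mod_cast hs) hα.le)
      have h2 : (if r < ‖X (stopIdx X A t ω) ω‖ then
          V (σ (stopIdx X A t ω) ω) (X (stopIdx X A t ω) ω) else 0) ≤ B t := by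
        split
        · exact hVB _ _ t (hXR _ t ω hs)
        · exact hB0 t
      have h3 : (0:ℝ) ≤ (if r < ‖X (stopIdx X A t ω) ω‖ then
          V (σ (stopIdx X A t ω) ω) (X (stopIdx X A t ω) ω) else 0) := by
        split
        · exact hV0 _ _
        · exact le_rfl
      simp only [hMdef]
      exact mul_le_mul h1 h2 h3 (Real.exp_nonneg _)
    have hMint : ∀ t, Integrable (M t) P := by
      intro t
      have hmeas : AEStronglyMeasurable (M t) P :=
        ((hMmeas t).mono (ℱ.le t) le_rfl).aestronglyMeasurable
      refine (integrable_const (Real.exp (α * t) * B t)).mono' hmeas ?_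
      filter_upwards with ω
      rw [Real.norm_eq_abs, abs_of_nonneg (hMnonneg t ω)]
      exact hMle t ω
    have hadp : StronglyAdapted ℱ M := fun t => by
      letI : MeasurableSpace Ω := ℱ t
      exact (hMmeas t).stronglyMeasurable
    have hstep : ∀ t, P[M (t + 1)|ℱ t] ≤ᵐ[P] M t := by
      intro t
      set D : Set Ω := {ω | ∀ m ≤ t, r < ‖X m ω‖} with hDdef
      have hDmeas : MeasurableSet[ℱ t] D := by
        have he : D = ⋂ m ∈ Set.Iic t, {ω | r < ‖X m ω‖} := by
          ext ω; simp [hDdef]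
        rw [he]
        refine MeasurableSet.biInter (Set.to_countable _) fun m hm => ?_
        have hm' : m ≤ t := hm
        exact hnorm_meas m t (by omega)
      set h : Fin N → Ω → ℝ := fun j ω => if ω ∈ D then
          Real.exp (α * ((t + 1 : ℕ) : ℝ)) *
            (if r < ‖X (t + 1) ω‖ then V j (X (t + 1) ω) else 0) else 0 with hhdef
      set g : Fin N → Ω → ℝ := fun j ω => if σ (t + 1) ω = j then 1 else 0 with hgdef
      have hrep : M (t + 1) = ∑ j : Fin N, (h j * g j) := by
        funext ω
        rw [Finset.sum_apply]
        simp only [Pi.mul_apply, hhdef, hgdef]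
        by_cases hD : ω ∈ D
        · have hs : stopIdx X A (t + 1) ω = t + 1 := hstop_nohit' t ω hD
          simp only [hMdef, hs, if_pos hD, mul_ite, mul_one, mul_zero]
          rw [Finset.sum_ite_eq]
          simp
        · have h0 := hMzero t ω (by simpa [hDdef] using hD)
          simp only [if_neg hD, zero_mul, Finset.sum_const_zero]
          exact h0.2
      have hh_nonneg : ∀ j ω, 0 ≤ h j ω := by
        intro j ω
        simp only [hhdef]
        split
        · refine mul_nonneg (Real.exp_nonneg _) ?_
          split
          · exact hV0 _ _
          · exact le_rfl
        · exact le_rfl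
      have hh_le : ∀ j ω, h j ω ≤ Real.exp (α * ((t + 1 : ℕ) : ℝ)) * B (t + 1) := by
        intro j ω
        simp only [hhdef]
        split
        · refine mul_le_mul_of_nonneg_left ?_ (Real.exp_nonneg _)
          split
          · exact hVB _ _ (t + 1) (hXR (t + 1) (t + 1) ω le_rfl)
          · exact hB0 (t + 1)
        · exact mul_nonneg (Real.exp_nonneg _) (hB0 (t + 1))
      have hhm : ∀ j, Measurable[ℱ t] (h j) := by
        intro j
        letI : MeasurableSpace Ω := ℱ t
        refine Measurable.ite hDmeas (measurable_const.mul
          (Measurable.ite (hnorm_meas (t + 1) t le_rfl)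
            ((hVmeas j).comp (hXmeas (t + 1) t le_rfl)) measurable_const)) measurable_const
      have hhsm : ∀ j, StronglyMeasurable[ℱ t] (h j) := fun j => by
        letI : MeasurableSpace Ω := ℱ t
        exact (hhm j).stronglyMeasurable
      have hgmeas : ∀ j, Measurable (g j) := fun j =>
        (measurable_of_countable (fun i : Fin N => if i = j then (1:ℝ) else 0)).comp
          ((hσad (t + 1)).mono (ℱ.le (t + 1)) le_rfl)
      have hg01 : ∀ j ω, 0 ≤ g j ω ∧ g j ω ≤ 1 := by
        intro j ω
        simp only [hgdef]
        split
        · exact ⟨zero_le_one, le_rfl⟩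
        · exact ⟨le_rfl, zero_le_one⟩
      have hgint : ∀ j, Integrable (g j) P := by
        intro j
        refine (integrable_const (1:ℝ)).mono' (hgmeas j).aestronglyMeasurable ?_
        filter_upwards with ω
        rw [Real.norm_eq_abs, abs_of_nonneg (hg01 j ω).1]
        exact (hg01 j ω).2
      have hhgint : ∀ j, Integrable (h j * g j) P := by
        intro j
        refine (integrable_const (Real.exp (α * ((t + 1 : ℕ) : ℝ)) * B (t + 1))).mono'
          (((hhm j).mono (ℱ.le t) le_rfl).mul (hgmeas j)).aestronglyMeasurable ?_
        filter_upwards with ω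
        rw [Pi.mul_apply, Real.norm_eq_abs,
          abs_of_nonneg (mul_nonneg (hh_nonneg j ω) (hg01 j ω).1)]
        calc h j ω * g j ω ≤ h j ω * 1 :=
              mul_le_mul_of_nonneg_left (hg01 j ω).2 (hh_nonneg j ω)
          _ = h j ω := mul_one _
          _ ≤ _ := hh_le j ω
      have hcond1 : P[M (t + 1)|ℱ t] =ᵐ[P] ∑ j : Fin N, P[h j * g j|ℱ t] := by
        rw [hrep]
        exact condExp_finsetSum (fun j _ => hhgint j) _
      have hcond2 : ∀ j : Fin N, P[h j * g j|ℱ t] =ᵐ[P] fun ω => h j ω * p (σ t ω) j := by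
        intro j
        have hpull := condExp_mul_of_stronglyMeasurable_left (hhsm j) (hhgint j) (hgint j)
        refine hpull.trans ?_
        have hmark : P[g j|ℱ t] =ᵐ[P] fun ω => p (σ t ω) j := by
          have hm := hMarkov t (fun i => if i = j then (1:ℝ) else 0)
          have heq : (fun ω => ∑ k, p (σ t ω) k * (if k = j then (1:ℝ) else 0)) =
              fun ω => p (σ t ω) j := by
            funext ω
            simp only [mul_ite, mul_one, mul_zero]
            rw [Finset.sum_ite_eq']
            simp
          exact heq ▸ hm
        filter_upwards [hmark] with ω hω
        rw [Pi.mul_apply, hω]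
      have hsum_eq : (∑ j : Fin N, fun ω => h j ω * p (σ t ω) j) =
          fun ω => ∑ j, h j ω * p (σ t ω) j := by
        funext ω; simp [Finset.sum_apply]
      have hcond3 : P[M (t + 1)|ℱ t] =ᵐ[P] fun ω => ∑ j, h j ω * p (σ t ω) j :=
        hcond1.trans (hsum_eq ▸ (eventuallyEq_sum fun j _ => hcond2 j))
      have hpt : ∀ ω, (∑ j, h j ω * p (σ t ω) j) ≤ M t ω := by
        intro ω
        by_cases hD : ω ∈ D
        · have hXt : r < ‖X t ω‖ := hD t le_rfl
          have hstop : stopIdx X A t ω = t := hstop_nohit t ω hD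
          have hMt : M t ω = Real.exp (α * t) * V (σ t ω) (X t ω) := by
            simp only [hMdef, hstop, if_pos hXt]
          have hx' : X (t + 1) ω = f (σ t ω) (X t ω) := rfl
          have step1 : ∀ j, h j ω * p (σ t ω) j ≤
              Real.exp (α * ((t + 1 : ℕ) : ℝ)) * (Λ j (σ t ω) * (μ * V (σ t ω) (X t ω))) *
                p (σ t ω) j := by
            intro j
            refine mul_le_mul_of_nonneg_right ?_ (hp (σ t ω) j)
            simp only [hhdef, if_pos hD]
            refine mul_le_mul_of_nonneg_left ?_ (Real.exp_nonneg _)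
            have hVle : V j (X (t + 1) ω) ≤ Λ j (σ t ω) * (μ * V (σ t ω) (X t ω)) := by
              rw [hx']
              calc V j (f (σ t ω) (X t ω)) ≤ Λ j (σ t ω) * V j (X t ω) := hV3' j (σ t ω) (X t ω)
                _ ≤ Λ j (σ t ω) * (μ * V (σ t ω) (X t ω)) :=
                    mul_le_mul_of_nonneg_left (hV2 j (σ t ω) (X t ω) hXt) (hΛ j (σ t ω))
            split
            · exact hVle
            · exact mul_nonneg (hΛ j (σ t ω)) (mul_nonneg (by linarith) (hV0 (σ t ω) (X t ω)))
          have step2 : (∑ j, h j ω * p (σ t ω) j) ≤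
              Real.exp (α * ((t + 1 : ℕ) : ℝ)) * (μ * V (σ t ω) (X t ω)) *
                (∑ j, p (σ t ω) j * Λ j (σ t ω)) := by
            calc (∑ j, h j ω * p (σ t ω) j)
                ≤ ∑ j, Real.exp (α * ((t + 1 : ℕ) : ℝ)) *
                    (Λ j (σ t ω) * (μ * V (σ t ω) (X t ω))) * p (σ t ω) j :=
                  Finset.sum_le_sum fun j _ => step1 j
              _ = _ := by
                  rw [Finset.mul_sum]
                  exact Finset.sum_congr rfl fun j _ => by ring
          have step3 : Real.exp (α * ((t + 1 : ℕ) : ℝ)) * (μ * V (σ t ω) (X t ω)) *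
              (∑ j, p (σ t ω) j * Λ j (σ t ω)) ≤
              Real.exp (α * ((t + 1 : ℕ) : ℝ)) * (μ * V (σ t ω) (X t ω)) * K :=
            mul_le_mul_of_nonneg_left (hKmem (σ t ω))
              (mul_nonneg (Real.exp_nonneg _)
                (mul_nonneg (by linarith) (hV0 (σ t ω) (X t ω))))
          have step4 : Real.exp (α * ((t + 1 : ℕ) : ℝ)) * (μ * V (σ t ω) (X t ω)) * K ≤
              Real.exp (α * t) * V (σ t ω) (X t ω) := by
            have hexp : Real.exp (α * ((t + 1 : ℕ) : ℝ)) = Real.exp (α * t) * Real.exp α := by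
              rw [← Real.exp_add]
              congr 1
              push_cast
              ring
            rw [hexp]
            have hmul := mul_le_mul_of_nonneg_left hkey
              (mul_nonneg (Real.exp_nonneg (α * (t:ℝ))) (hV0 (σ t ω) (X t ω)))
            nlinarith [hmul]
          rw [hMt]
          exact le_trans step2 (le_trans step3 step4)
        · have h0 := (hMzero t ω (by simpa [hDdef] using hD)).1
          have hz : ∀ j, h j ω = 0 := fun j => by simp [hhdef, if_neg hD]
          simp only [hz, zero_mul, Finset.sum_const_zero, h0, le_refl]
      exact hcond3.le.trans (Filter.Eventually.of_forall hpt)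
    exact supermartingale_nat hadp hMint hstep
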